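/- Let n ≥ 4 and let X, Y, Z be such that A = s(X, X+2), B = s(X, Z), and C = s(X+1, Y) are pairwise distinct proper n-sided one-step dice no two of which tie. Then C beats B, B beats A, and C beats A; in particular {A,B,C} is transitive. -/
import Mathlib


/-- The number of pairs (i,j) for which the i-th face of die `A` is strictly greater than
the j-th face of die `B`.  (A die is modeled as a multiset of faces, which is equivalent to
a nondecreasing tuple.) -/
def diceWins (A B : Multiset ℕ) : ℕ :=
  (A.map (fun a => (B.filter (fun b => b < a)).card)).sum

/-- Die `A` beats die `B`. -/
def diceBeats (A B : Multiset ℕ) : Prop := diceWins B A < diceWins A B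

/-- Dice `A` and `B` tie. -/
def diceTies (A B : Multiset ℕ) : Prop := diceWins A B = diceWins B A

/-- A proper `n`-sided die: `n` faces, each between `1` and `n`, summing to `n(n+1)/2`. -/
def isProperDie (n : ℕ) (A : Multiset ℕ) : Prop :=
  Multiset.card A = n ∧ (∀ x ∈ A, 1 ≤ x ∧ x ≤ n) ∧ A.sum = n * (n + 1) / 2

/-- The one-step die `s(a,b)`: the multiset `{1,…,n}` with `a` and `b` removed and
`a+1` and `b-1` added. -/
def stepDie (n a b : ℕ) : Multiset ℕ :=
  (Multiset.Icc 1 n - {a, b}) + {a + 1, b - 1}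

/-- The conditions on `(a,b)` under which `s(a,b)` is a proper `n`-sided one-step die. -/
def validStep (n a b : ℕ) : Prop :=
  1 ≤ a ∧ a ≤ n - 1 ∧ 2 ≤ b ∧ b ≤ n ∧ b ≠ a ∧ b ≠ a + 1

instance (n a b : ℕ) : Decidable (validStep n a b) := by unfold validStep; infer_instance

/-- `D` is a proper `n`-sided one-step die. -/
def isOneStepDie (n : ℕ) (D : Multiset ℕ) : Prop :=
  ∃ a b, validStep n a b ∧ D = stepDie n a b

/-- A three-element set of dice is intransitive if it can be labeled so that
`A` beats `B`, `B` beats `C` and `C` beats `A`. -/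
def IntransitiveTriple (s : Finset (Multiset ℕ)) : Prop :=
  ∃ A B C, s = {A, B, C} ∧ diceBeats A B ∧ diceBeats B C ∧ diceBeats C A

/-- A three-element set of dice is transitive if it can be labeled so that
`A` beats `B`, `A` beats `C` and `B` beats `C`. -/
def TransitiveTriple (s : Finset (Multiset ℕ)) : Prop :=
  ∃ A B C, s = {A, B, C} ∧ diceBeats A B ∧ diceBeats A C ∧ diceBeats B C

/-- The set of unordered triples of pairwise distinct proper `n`-sided one-step dice
in which no two of the three dice tie. -/
def tripleSet (n : ℕ) : Set (Finset (Multiset ℕ)) :=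
  {s | s.card = 3 ∧ (∀ D ∈ s, isOneStepDie n D) ∧
    ∀ A ∈ s, ∀ B ∈ s, A ≠ B → ¬ diceTies A B}


def sg (u v : ℕ) : ℤ := if v < u then 1 else if u < v then -1 else 0

def marginM (A B : Multiset ℕ) : ℤ :=
  (A.map (fun a => (B.map (fun b => sg a b)).sum)).sum

lemma margin_add_left (A A' B : Multiset ℕ) :
    marginM (A + A') B = marginM A B + marginM A' B := by
  simp [marginM]

lemma margin_add_right (A B B' : Multiset ℕ) :
    marginM A (B + B') = marginM A B + marginM A B' := by
  simp [marginM, Multiset.sum_map_add]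

lemma margin_pair_pair (p q r s : ℕ) :
    marginM {p, q} {r, s} = sg p r + sg p s + sg q r + sg q s := by
  simp [marginM, Multiset.insert_eq_cons]; ring

lemma margin_Icc_singleton (n x : ℕ) (h1 : 1 ≤ x) (h2 : x ≤ n) :
    marginM (Multiset.Icc 1 n) {x} = (n : ℤ) + 1 - 2 * x := by
  have key : ∀ m : ℕ, ∀ y : ℕ, 1 ≤ y →
      ((Multiset.Icc 1 m).map (fun a => sg a y)).sum
        = if y ≤ m then (m : ℤ) + 1 - 2 * y else -(m : ℤ) := by
    intro m
    induction m with
    | zero => intro y hy; simp [sg]; omega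
    | succ k ih =>
        intro y hy
        have hs : Multiset.Icc 1 (k+1) = (k+1) ::ₘ Multiset.Icc 1 k := by
          have hins : Finset.Icc 1 (k+1) = insert (k+1) (Finset.Icc 1 k) := by
            ext z; simp [Finset.mem_Icc]; omega
          have hnm : (k+1) ∉ Finset.Icc 1 k := by simp
          calc Multiset.Icc 1 (k+1) = (Finset.Icc 1 (k+1)).val := rfl
            _ = (insert (k+1) (Finset.Icc 1 k)).val := by rw [hins]
            _ = (k+1) ::ₘ (Finset.Icc 1 k).val := by rw [Finset.insert_val_of_notMem hnm]
        rw [hs]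
        simp only [Multiset.map_cons, Multiset.sum_cons, ih y hy]
        rcases (by omega : y ≤ k ∨ y = k + 1 ∨ k + 1 < y) with h | h | h
        · have hsg : sg (k+1) y = 1 := by unfold sg; split_ifs <;> omega
          simp only [hsg]
          first
          | (split_ifs <;> push_cast <;> omega)
          | (push_cast; omega)
        · subst h
          have hsg : sg (k+1) (k+1) = 0 := by unfold sg; split_ifs <;> omega
          simp only [hsg]
          first
          | (split_ifs <;> push_cast <;> omega)
          | (push_cast; omega)
        · have hsg : sg (k+1) y = -1 := by unfold sg; split_ifs <;> omega
          simp only [hsg]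
          first
          | (split_ifs <;> push_cast <;> omega)
          | (push_cast; omega)
  have hm : marginM (Multiset.Icc 1 n) {x}
      = ((Multiset.Icc 1 n).map (fun a => sg a x)).sum := by
    simp [marginM]
  rw [hm, key n x h1]
  simp [h2]

lemma step_add (n a b : ℕ) (h : validStep n a b) :
    stepDie n a b + {a, b} = Multiset.Icc 1 n + {a + 1, b - 1} := by
  obtain ⟨h1, h2, h3, h4, h5, h6⟩ := h
  have hle : ({a, b} : Multiset ℕ) ≤ Multiset.Icc 1 n := by
    rw [Multiset.le_iff_count]
    intro x
    have hnodup : (Multiset.Icc 1 n).Nodup := Multiset.nodup_Icc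
    by_cases hxa : x = a
    · subst hxa
      have hmem : x ∈ Multiset.Icc 1 n := by rw [Multiset.mem_Icc]; omega
      have hc : (Multiset.Icc 1 n).count x = 1 := Multiset.count_eq_one_of_mem hnodup hmem
      rw [hc]
      simp [Multiset.insert_eq_cons, Multiset.count_cons]
      omega
    · by_cases hxb : x = b
      · subst hxb
        have hmem : x ∈ Multiset.Icc 1 n := by rw [Multiset.mem_Icc]; omega
        have hc : (Multiset.Icc 1 n).count x = 1 := Multiset.count_eq_one_of_mem hnodup hmem
        rw [hc]
        simp [Multiset.insert_eq_cons, Multiset.count_cons]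
        omega
      · simp [Multiset.insert_eq_cons, Multiset.count_cons, hxa, hxb]
  unfold stepDie
  rw [add_right_comm, tsub_add_cancel_of_le hle]

lemma sg_cases (u v : ℕ) :
    (v < u ∧ sg u v = 1) ∨ (u < v ∧ sg u v = -1) ∨ (u = v ∧ sg u v = 0) := by
  unfold sg; split_ifs <;> omega

lemma card_filter_sum (p : ℕ → Prop) [DecidablePred p] (B : Multiset ℕ) :
    ((B.filter p).card : ℤ) = (B.map (fun b => if p b then (1:ℤ) else 0)).sum := by
  induction B using Multiset.induction with
  | empty => simp
  | cons x s ih => by_cases h : p x <;> simp [Multiset.filter_cons, h, ih] <;> omega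

lemma innerSumSg (a : ℕ) (B : Multiset ℕ) :
    (B.map (fun b => sg a b)).sum
      = ((B.filter (fun b => b < a)).card : ℤ) - ((B.filter (fun b => a < b)).card : ℤ) := by
  rw [card_filter_sum, card_filter_sum]
  induction B using Multiset.induction with
  | empty => simp
  | cons x s ih =>
      simp only [Multiset.map_cons, Multiset.sum_cons, ih]
      have := sg_cases a x
      split_ifs <;> omega

lemma diceWins_cons_right (B : Multiset ℕ) (a : ℕ) (A : Multiset ℕ) :
    diceWins B (a ::ₘ A) = (B.filter (fun b => a < b)).card + diceWins B A := by
  unfold diceWins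
  induction B using Multiset.induction with
  | empty => simp
  | cons x s ih =>
      simp only [Multiset.map_cons, Multiset.sum_cons, Multiset.filter_cons] at *
      by_cases h : a < x <;> simp [h] at * <;> omega

lemma margin_spec (A B : Multiset ℕ) :
    marginM A B = (diceWins A B : ℤ) - (diceWins B A : ℤ) := by
  induction A using Multiset.induction with
  | empty => simp [marginM, diceWins]
  | cons a s ih =>
      have h1 : marginM (a ::ₘ s) B = (B.map (fun b => sg a b)).sum + marginM s B := by
        simp [marginM]
      have h2 : diceWins (a ::ₘ s) B = (B.filter (fun b => b < a)).card + diceWins s B := by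
        simp [diceWins]
      rw [h1, h2, innerSumSg, diceWins_cons_right B a s, ih]
      push_cast; ring

lemma margin_anti (A B : Multiset ℕ) : marginM A B = - marginM B A := by
  rw [margin_spec, margin_spec]; ring

lemma margin_step_step (n a b c d : ℕ) (ha : validStep n a b) (hc : validStep n c d) :
    marginM (stepDie n a b) (stepDie n c d) =
      (sg (a+1) (c+1) + sg (a+1) (d-1) + sg (b-1) (c+1) + sg (b-1) (d-1))
      - (sg (a+1) c + sg (a+1) d + sg (b-1) c + sg (b-1) d)
      - (sg a (c+1) + sg a (d-1) + sg b (c+1) + sg b (d-1))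
      + (sg a c + sg a d + sg b c + sg b d) := by
  have eA := step_add n a b ha
  have eC := step_add n c d hc
  obtain ⟨ha1, ha2, ha3, ha4, _, _⟩ := ha
  obtain ⟨hc1, hc2, hc3, hc4, _, _⟩ := hc
  have hn : 2 ≤ n := by omega
  have hIpair : ∀ p q : ℕ, 1 ≤ p → p ≤ n → 1 ≤ q → q ≤ n →
      marginM (Multiset.Icc 1 n) {p, q} = ((n:ℤ)+1-2*p) + ((n:ℤ)+1-2*q) := by
    intro p q hp1 hp2 hq1 hq2
    have hsplit : ({p, q} : Multiset ℕ) = {p} + {q} := by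
      rw [Multiset.insert_eq_cons, Multiset.singleton_add]
    rw [hsplit, margin_add_right, margin_Icc_singleton n p hp1 hp2,
        margin_Icc_singleton n q hq1 hq2]
  have expandL : ∀ B, marginM (stepDie n a b) B
      = marginM (Multiset.Icc 1 n) B + marginM {a+1, b-1} B - marginM {a, b} B := by
    intro B
    have h := congrArg (fun M : Multiset ℕ => marginM M B) eA
    simp only [margin_add_left] at h
    linarith
  have expandR : ∀ A', marginM A' (stepDie n c d)
      = marginM A' (Multiset.Icc 1 n) + marginM A' {c+1, d-1} - marginM A' {c, d} := by
    intro A'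
    have h := congrArg (fun M : Multiset ℕ => marginM A' M) eC
    simp only [margin_add_right] at h
    linarith
  rw [expandL, expandR, expandR, expandR]
  have hII : marginM (Multiset.Icc 1 n) (Multiset.Icc 1 n) = 0 := by
    rw [margin_spec]; ring
  have hIC : marginM (Multiset.Icc 1 n) {c+1, d-1} - marginM (Multiset.Icc 1 n) {c, d} = 0 := by
    rw [hIpair (c+1) (d-1) (by omega) (by omega) (by omega) (by omega),
        hIpair c d (by omega) (by omega) (by omega) (by omega)]
    omega
  have hAI : marginM {a+1, b-1} (Multiset.Icc 1 n) - marginM {a, b} (Multiset.Icc 1 n) = 0 := by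
    rw [margin_anti {a+1, b-1}, margin_anti {a, b},
        hIpair (a+1) (b-1) (by omega) (by omega) (by omega) (by omega),
        hIpair a b (by omega) (by omega) (by omega) (by omega)]
    omega
  rw [margin_pair_pair, margin_pair_pair, margin_pair_pair, margin_pair_pair]
  linarith

set_option maxHeartbeats 2000000 in
/-- `A = s(X,X+2)`, `B = s(X,Z)`, `C = s(X+1,Y)` form a transitive triple
with `C > B > A`. -/
theorem case_one_transitive (n X Y Z : ℕ) (hn : 4 ≤ n)
    (hA : validStep n X (X + 2)) (hB : validStep n X Z) (hC : validStep n (X + 1) Y)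
    (hAB : stepDie n X (X + 2) ≠ stepDie n X Z)
    (hAC : stepDie n X (X + 2) ≠ stepDie n (X + 1) Y)
    (hBC : stepDie n X Z ≠ stepDie n (X + 1) Y)
    (tAB : ¬ diceTies (stepDie n X (X + 2)) (stepDie n X Z))
    (tAC : ¬ diceTies (stepDie n X (X + 2)) (stepDie n (X + 1) Y))
    (tBC : ¬ diceTies (stepDie n X Z) (stepDie n (X + 1) Y)) :
    diceBeats (stepDie n (X + 1) Y) (stepDie n X Z) ∧
    diceBeats (stepDie n X Z) (stepDie n X (X + 2)) ∧
    diceBeats (stepDie n (X + 1) Y) (stepDie n X (X + 2)) ∧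
    TransitiveTriple {stepDie n X (X + 2), stepDie n X Z, stepDie n (X + 1) Y} := by
  -- margins
  have hZ : Z ≠ X + 2 := by
    intro h; exact hAB (by rw [h])
  have beats_of_margin : ∀ A B : Multiset ℕ, 0 < marginM A B → diceBeats A B := by
    intro A B h
    have := margin_spec A B
    unfold diceBeats
    omega
  -- B beats A
  have hBA : 0 < marginM (stepDie n X Z) (stepDie n X (X + 2)) := by
    rw [margin_step_step n X Z X (X+2) hB hA]
    obtain ⟨hB1, hB2, hB3, hB4, hB5, hB6⟩ := hB
    have c1 := sg_cases (X+1) (X+1)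
    have c2 := sg_cases (X+1) (X+2-1)
    have c3 := sg_cases (Z-1) (X+1)
    have c4 := sg_cases (Z-1) (X+2-1)
    have c5 := sg_cases (X+1) X
    have c6 := sg_cases (X+1) (X+2)
    have c7 := sg_cases (Z-1) X
    have c8 := sg_cases (Z-1) (X+2)
    have c9 := sg_cases X (X+1)
    have c10 := sg_cases X (X+2-1)
    have c11 := sg_cases Z (X+1)
    have c12 := sg_cases Z (X+2-1)
    have c13 := sg_cases X X
    have c14 := sg_cases X (X+2)
    have c15 := sg_cases Z X
    have c16 := sg_cases Z (X+2)
    omega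
  -- C beats A
  have hCA : 0 < marginM (stepDie n (X + 1) Y) (stepDie n X (X + 2)) := by
    rw [margin_step_step n (X+1) Y X (X+2) hC hA]
    obtain ⟨hC1, hC2, hC3, hC4, hC5, hC6⟩ := hC
    have c1 := sg_cases (X+1+1) (X+1)
    have c2 := sg_cases (X+1+1) (X+2-1)
    have c3 := sg_cases (Y-1) (X+1)
    have c4 := sg_cases (Y-1) (X+2-1)
    have c5 := sg_cases (X+1+1) X
    have c6 := sg_cases (X+1+1) (X+2)
    have c7 := sg_cases (Y-1) X
    have c8 := sg_cases (Y-1) (X+2)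
    have c9 := sg_cases (X+1) (X+1)
    have c10 := sg_cases (X+1) (X+2-1)
    have c11 := sg_cases Y (X+1)
    have c12 := sg_cases Y (X+2-1)
    have c13 := sg_cases (X+1) X
    have c14 := sg_cases (X+1) (X+2)
    have c15 := sg_cases Y X
    have c16 := sg_cases Y (X+2)
    omega
  -- C beats B
  have hCB : 0 < marginM (stepDie n (X + 1) Y) (stepDie n X Z) := by
    have hne : marginM (stepDie n (X + 1) Y) (stepDie n X Z) ≠ 0 := by
      intro h
      apply tBC
      have := margin_spec (stepDie n (X + 1) Y) (stepDie n X Z)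
      unfold diceTies
      omega
    rw [margin_step_step n (X+1) Y X Z hC hB] at hne ⊢
    obtain ⟨hC1, hC2, hC3, hC4, hC5, hC6⟩ := hC
    obtain ⟨hB1, hB2, hB3, hB4, hB5, hB6⟩ := hB
    have c1 := sg_cases (X+1+1) (X+1)
    have c2 := sg_cases (X+1+1) (Z-1)
    have c3 := sg_cases (Y-1) (X+1)
    have c4 := sg_cases (Y-1) (Z-1)
    have c5 := sg_cases (X+1+1) X
    have c6 := sg_cases (X+1+1) Z
    have c7 := sg_cases (Y-1) X
    have c8 := sg_cases (Y-1) Z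
    have c9 := sg_cases (X+1) (X+1)
    have c10 := sg_cases (X+1) (Z-1)
    have c11 := sg_cases Y (X+1)
    have c12 := sg_cases Y (Z-1)
    have c13 := sg_cases (X+1) X
    have c14 := sg_cases (X+1) Z
    have c15 := sg_cases Y X
    have c16 := sg_cases Y Z
    omega
  have b1 : diceBeats (stepDie n (X + 1) Y) (stepDie n X Z) :=
    beats_of_margin _ _ hCB
  have b2 : diceBeats (stepDie n X Z) (stepDie n X (X + 2)) :=
    beats_of_margin _ _ hBA
  have b3 : diceBeats (stepDie n (X + 1) Y) (stepDie n X (X + 2)) :=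
    beats_of_margin _ _ hCA
  refine ⟨b1, b2, b3, stepDie n (X + 1) Y, stepDie n X Z, stepDie n X (X + 2), ?_, b1, b3, b2⟩
  ext x
  simp only [Finset.mem_insert, Finset.mem_singleton]
  tauto
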